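/- Let X be a smooth projective surface and let R1, ..., Rn be distinct integral curves on X such that every proper subset of {R1, ..., Rn} has negative definite intersection matrix, but the full set does not. Then there exist positive integers c1, ..., cn such that the divisor A = c1 R1 + ... + cn Rn satisfies A² ≥ 0; moreover A can be chosen nef. -/

import Mathlib

/-!
Induction on the number of curves, eliminating the first one. For the Gram matrix `M`, put
`d = -M₀₀ > 0`, let `a` be the rest of the first row and `N` the remaining principal block.
Then `M' = d • N + a aᵀ` again has nonnegative off-diagonal entries, negative definite proper
principal submatrices and a nonzero vector of nonnegative square, because
`d · q_M(t, x) = q_{M'}(x) - (a ⬝ x - d t)²`. By induction some positive `c` has `M' c ≥ 0`, and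
then `y = (a ⬝ c, d c)` is orthogonal to the first curve and meets every other one nonnegatively.
Its coefficients are all positive: a nonnegative nonzero vector with a vanishing coefficient has
negative square, whereas `y` is nonnegative with `M y ≥ 0`.
-/

namespace Matrix

section Pivot

variable {R : Type*} [CommRing R] {n : ℕ} (M : Matrix (Fin (n + 1)) (Fin (n + 1)) R)

-- The Schur complement of the pivot `M 0 0`, scaled by `-M 0 0` so that no division occurs.
def schurZero : Matrix (Fin n) (Fin n) R :=
  -M 0 0 • M.submatrix Fin.succ Fin.succ + vecMulVec (vecTail (M 0)) (vecTail (M 0))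

theorem schurZero_mulVec (x : Fin n → R) :
    M.schurZero *ᵥ x = -M 0 0 • (M.submatrix Fin.succ Fin.succ *ᵥ x) +
      (vecTail (M 0) ⬝ᵥ x) • vecTail (M 0) := by
  rw [schurZero, add_mulVec, smul_mulVec, vecMulVec_mulVec]
  ext i
  simp [mul_comm]

variable {M}

theorem IsSymm.mulVec_cons (hM : M.IsSymm) (t : R) (x : Fin n → R) :
    M *ᵥ vecCons t x = vecCons (M 0 0 * t + vecTail (M 0) ⬝ᵥ x)
      (t • vecTail (M 0) + M.submatrix Fin.succ Fin.succ *ᵥ x) := by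
  ext i
  refine Fin.cases ?_ (fun i => ?_) i
  · simp [mulVec, dotProduct, Fin.sum_univ_succ, vecTail]
  · simp [mulVec, dotProduct, Fin.sum_univ_succ, vecTail, hM.apply 0 i.succ, mul_comm]

theorem IsSymm.mulVec_cons_schurZero (hM : M.IsSymm) (c : Fin n → R) :
    M *ᵥ vecCons (vecTail (M 0) ⬝ᵥ c) (-M 0 0 • c) = vecCons 0 (M.schurZero *ᵥ c) := by
  rw [hM.mulVec_cons, schurZero_mulVec, mulVec_smul, dotProduct_smul, smul_eq_mul]
  congr 1
  · ring
  · exact add_comm _ _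

theorem IsSymm.neg_mul_quadratic_cons (hM : M.IsSymm) (t : R) (x : Fin n → R) :
    -M 0 0 * (vecCons t x ⬝ᵥ (M *ᵥ vecCons t x)) =
      x ⬝ᵥ (M.schurZero *ᵥ x) - (vecTail (M 0) ⬝ᵥ x + M 0 0 * t) ^ 2 := by
  rw [hM.mulVec_cons, cons_dotProduct_cons, schurZero_mulVec]
  simp only [dotProduct_add, dotProduct_smul, smul_eq_mul, dotProduct_comm x (vecTail (M 0))]
  ring

theorem IsSymm.schurZero (hM : M.IsSymm) : M.schurZero.IsSymm :=
  ((hM.submatrix _).smul _).add (IsSymm.ext fun _ _ => mul_comm _ _)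

end Pivot

variable {R : Type*} [CommRing R] [LinearOrder R] [IsStrictOrderedRing R]

-- `x` vanishing at some index means `x` is supported on a proper subset of the indices.
def ProperPrincipalNegDef {ι : Type*} [Fintype ι] (M : Matrix ι ι R) : Prop :=
  ∀ x : ι → R, x ≠ 0 → (∃ i, x i = 0) → x ⬝ᵥ (M *ᵥ x) < 0

theorem ProperPrincipalNegDef.pos_of_mulVec_nonneg {ι : Type*} [Fintype ι] {M : Matrix ι ι R}
    (hM : M.ProperPrincipalNegDef) {c : ι → R} (hc : 0 ≤ c) (hc0 : c ≠ 0)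
    (hMc : 0 ≤ M *ᵥ c) (i : ι) : 0 < c i :=
  (hc i).lt_of_ne' fun hci =>
    (hM c hc0 ⟨i, hci⟩).not_ge (dotProduct_nonneg_of_nonneg hc hMc)

section Elimination

variable {n : ℕ} {M : Matrix (Fin (n + 2)) (Fin (n + 2)) R}

theorem ProperPrincipalNegDef.apply_zero_zero_neg (hneg : M.ProperPrincipalNegDef) :
    M 0 0 < 0 := by
  simpa using hneg (Pi.single 0 1) (Pi.single_ne_zero_iff.2 one_ne_zero) ⟨1, by simp⟩

theorem pairwise_nonneg_schurZero (hneg : M.ProperPrincipalNegDef)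
    (hoff : Pairwise fun i j => 0 ≤ M i j) : Pairwise fun i j => 0 ≤ M.schurZero i j := by
  intro i j hij
  have hpiv := hneg.apply_zero_zero_neg
  have htail : 0 ≤ vecTail (M 0) := fun k => hoff (Fin.succ_ne_zero k).symm
  have hM : 0 ≤ M i.succ j.succ := hoff ((Fin.succ_injective _).ne hij)
  simp only [schurZero, add_apply, smul_apply, submatrix_apply, vecMulVec_apply, smul_eq_mul]
  exact add_nonneg (mul_nonneg (neg_nonneg.2 hpiv.le) hM) (mul_nonneg (htail i) (htail j))

theorem ProperPrincipalNegDef.schurZero (hM : M.IsSymm) (hneg : M.ProperPrincipalNegDef) :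
    M.schurZero.ProperPrincipalNegDef := by
  rintro x hx ⟨i, hi⟩
  have hpiv : 0 < -M 0 0 := neg_pos.2 hneg.apply_zero_zero_neg
  set y := vecCons (vecTail (M 0) ⬝ᵥ x) (-M 0 0 • x)
  have hy : y ≠ 0 := fun h => smul_ne_zero hpiv.ne' hx (by simpa [y] using congrArg vecTail h)
  have hyi : y i.succ = 0 := by simp [y, hi]
  have hq : y ⬝ᵥ (M *ᵥ y) = -M 0 0 * (x ⬝ᵥ (M.schurZero *ᵥ x)) := by
    rw [hM.mulVec_cons_schurZero, cons_dotProduct_cons, smul_dotProduct, smul_eq_mul, mul_zero,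
      zero_add]
  exact neg_of_mul_neg_right (hq ▸ hneg y hy ⟨_, hyi⟩) hpiv.le

theorem ProperPrincipalNegDef.exists_nonneg_quadratic_schurZero (hM : M.IsSymm)
    (hneg : M.ProperPrincipalNegDef) {z : Fin (n + 2) → R} (hz : z ≠ 0)
    (hqz : 0 ≤ z ⬝ᵥ (M *ᵥ z)) : ∃ x ≠ 0, 0 ≤ x ⬝ᵥ (M.schurZero *ᵥ x) := by
  have hpiv : 0 < -M 0 0 := neg_pos.2 hneg.apply_zero_zero_neg
  refine ⟨vecTail z, fun h => ?_, ?_⟩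
  · refine (hneg z hz ⟨1, ?_⟩).not_ge hqz
    simpa [vecTail] using congrFun h 0
  · have key := hM.neg_mul_quadratic_cons (vecHead z) (vecTail z)
    rw [cons_head_tail] at key
    nlinarith [mul_nonneg hpiv.le hqz, sq_nonneg (vecTail (M 0) ⬝ᵥ vecTail z + M 0 0 * vecHead z)]

theorem ProperPrincipalNegDef.exists_pos_mulVec_nonneg_of_schurZero (hM : M.IsSymm)
    (hoff : Pairwise fun i j => 0 ≤ M i j) (hneg : M.ProperPrincipalNegDef)
    {c : Fin (n + 1) → R} (hc : ∀ i, 0 < c i) (hSc : 0 ≤ M.schurZero *ᵥ c) :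
    ∃ c : Fin (n + 2) → R, (∀ i, 0 < c i) ∧ 0 ≤ M *ᵥ c := by
  have hpiv : 0 < -M 0 0 := neg_pos.2 hneg.apply_zero_zero_neg
  have htail : 0 ≤ vecTail (M 0) := fun k => hoff (Fin.succ_ne_zero k).symm
  set y := vecCons (vecTail (M 0) ⬝ᵥ c) (-M 0 0 • c)
  have hMy : M *ᵥ y = vecCons 0 (M.schurZero *ᵥ c) := hM.mulVec_cons_schurZero c
  have hy : 0 ≤ y := by
    refine Fin.cases ?_ (fun i => ?_)
    · exact dotProduct_nonneg_of_nonneg htail fun i => (hc i).le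
    · simpa [y] using mul_nonneg hpiv.le (hc i).le
  have hy0 : y ≠ 0 := fun h => (mul_pos hpiv (hc 0)).ne' (by simpa [y] using congrFun h 1)
  have hMy0 : 0 ≤ M *ᵥ y := by
    rw [hMy]
    exact Fin.cases le_rfl hSc
  exact ⟨y, hneg.pos_of_mulVec_nonneg hy hy0 hMy0, hMy0⟩

end Elimination

theorem exists_pos_mulVec_nonneg_of_fin_one {M : Matrix (Fin 1) (Fin 1) R} {z : Fin 1 → R}
    (hz : z ≠ 0) (hqz : 0 ≤ z ⬝ᵥ (M *ᵥ z)) : ∃ c : Fin 1 → R, (∀ i, 0 < c i) ∧ 0 ≤ M *ᵥ c := by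
  have hz0 : z 0 ≠ 0 := fun h => hz (funext fun i => by rwa [Subsingleton.elim i 0])
  have hM : 0 ≤ M 0 0 := by
    simp only [dotProduct, mulVec, Fin.sum_univ_one] at hqz
    nlinarith [mul_self_pos.2 hz0]
  refine ⟨1, fun _ => one_pos, fun i => ?_⟩
  simpa [Subsingleton.elim i 0, mulVec, dotProduct] using hM

theorem ProperPrincipalNegDef.exists_pos_mulVec_nonneg {n : ℕ} {M : Matrix (Fin n) (Fin n) R}
    (hM : M.IsSymm) (hoff : Pairwise fun i j => 0 ≤ M i j) (hneg : M.ProperPrincipalNegDef)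
    {z : Fin n → R} (hz : z ≠ 0) (hqz : 0 ≤ z ⬝ᵥ (M *ᵥ z)) :
    ∃ c : Fin n → R, (∀ i, 0 < c i) ∧ 0 ≤ M *ᵥ c := by
  induction n with
  | zero => exact absurd (Subsingleton.elim z 0) hz
  | succ n ih =>
    rcases n with _ | n
    · exact exists_pos_mulVec_nonneg_of_fin_one hz hqz
    · obtain ⟨x, hx, hqx⟩ := hneg.exists_nonneg_quadratic_schurZero hM hz hqz
      obtain ⟨c, hc, hSc⟩ := ih hM.schurZero (pairwise_nonneg_schurZero hneg hoff)
        (hneg.schurZero hM) hx hqx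
      exact hneg.exists_pos_mulVec_nonneg_of_schurZero hM hoff hc hSc

end Matrix

open Matrix

theorem stmt_13 (Λ : Type*) [AddCommGroup Λ] [Module ℤ Λ]
    (B : Λ →ₗ[ℤ] Λ →ₗ[ℤ] ℤ)
    (hsymm : ∀ x y, B x y = B y x)
    (n : ℕ) (R : Fin n → Λ)
    (hcurves : ∀ i j, i ≠ j → 0 ≤ B (R i) (R j))
    (hproper : ∀ S : Finset (Fin n), S ≠ Finset.univ →
      ∀ c : Fin n → ℤ, (∀ i, i ∉ S → c i = 0) → c ≠ 0 →
        B (∑ i, c i • R i) (∑ i, c i • R i) < 0)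
    (hfull : ¬ ∀ c : Fin n → ℤ, c ≠ 0 →
        B (∑ i, c i • R i) (∑ i, c i • R i) < 0) :
    ∃ c : Fin n → ℤ, (∀ i, 0 < c i) ∧
      0 ≤ B (∑ i, c i • R i) (∑ i, c i • R i) ∧
      ∀ j, 0 ≤ B (∑ i, c i • R i) (R j) := by
  set G : Matrix (Fin n) (Fin n) ℤ := Matrix.of fun i j => B (R i) (R j)
  have hG : G.IsSymm := IsSymm.ext fun i j => hsymm (R j) (R i)
  have hdot : ∀ c j, B (∑ i, c i • R i) (R j) = (G *ᵥ c) j := fun c j => by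
    simp [mulVec, dotProduct, G, hsymm (R _) (R j), mul_comm]
  have hquad : ∀ c, B (∑ i, c i • R i) (∑ i, c i • R i) = c ⬝ᵥ (G *ᵥ c) := fun c => by
    simp only [map_sum (B (∑ i, c i • R i)), map_zsmul, hdot, smul_eq_mul, dotProduct]
  have hneg : ProperPrincipalNegDef G := by
    rintro x hx ⟨i, hi⟩
    rw [← hquad]
    refine hproper (Finset.univ.erase i) (Finset.erase_ne_self.2 (Finset.mem_univ i)) x
      (fun j hj => ?_) hx
    simp only [Finset.mem_erase, Finset.mem_univ, and_true, not_not] at hj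
    rwa [hj]
  push Not at hfull
  obtain ⟨z, hz, hqz⟩ := hfull
  obtain ⟨c, hc, hGc⟩ := hneg.exists_pos_mulVec_nonneg hG hcurves hz (hquad z ▸ hqz)
  refine ⟨c, hc, ?_, fun j => hdot c j ▸ hGc j⟩
  rw [hquad]
  exact dotProduct_nonneg_of_nonneg (fun i => (hc i).le) hGc
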